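/- Convergence of multiple zeta values: for every integer d ≥ 1 and every tuple (k₁,…,k_d) of positive integers with k_d ≥ 2, the family of real numbers 1/(n₁^{k₁}⋯n_d^{k_d}), indexed by strictly increasing d-tuples (n₁,…,n_d) of positive integers, is summable; in particular the multiple zeta value ζ(k₁,…,k_d) := ∑_{0<n₁<⋯<n_d} 1/(n₁^{k₁}⋯n_d^{k_d}) is well defined. -/

import Mathlib

/-!
Write `q = 1 + 1/d`. Since `k_j ≥ 1`, `k_d ≥ 2` and every `n_j ≤ n_d`,
`n₁^{k₁} ⋯ n_d^{k_d} ≥ n₁ ⋯ n_d · n_d = ∏ⱼ (n_j · n_d^{1/d}) ≥ ∏ⱼ n_j^q`.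
So the family is dominated by the restriction of `∏ⱼ n_j^{-q}` from all `d`-tuples, and the
latter family is the product of `d` copies of the convergent series `∑ n^{-q}`.
-/

open Finset

theorem summable_fin_pi_prod {n : ℕ} {α : Fin n → Type*} (f : ∀ i, α i → ℝ)
    (hf : ∀ i, Summable (f i)) (hf₀ : ∀ i a, 0 ≤ f i a) :
    Summable fun x : (∀ i, α i) => ∏ i, f i (x i) := by
  induction n with
  | zero => exact Summable.of_finite
  | succ n ih =>
    have hcons := (hf 0).mul_of_nonneg (ih (fun i => f i.succ) (fun i => hf _) (fun i => hf₀ _))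
      (hf₀ 0) fun x => prod_nonneg fun i _ => hf₀ _ _
    refine ((Fin.consEquiv α).symm.summable_iff.2 hcons).congr fun x => ?_
    simp [Fin.consEquiv, Fin.prod_univ_succ, Fin.tail]

section

variable {ι : Type*} [Fintype ι] {x : ι → ℝ} {i₀ : ι}

theorem prod_mul_le_prod_pow [DecidableEq ι] (hx : ∀ i, 1 ≤ x i) {k : ι → ℕ}
    (hk : ∀ i, k i ≠ 0) (hk₀ : 2 ≤ k i₀) : (∏ i, x i) * x i₀ ≤ ∏ i, x i ^ k i := by
  have hx₀ : ∀ i, 0 ≤ x i := fun i => zero_le_one.trans (hx i)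
  rw [← mul_prod_erase univ _ (mem_univ i₀), ← mul_prod_erase univ _ (mem_univ i₀),
    mul_right_comm, ← sq]
  exact mul_le_mul (pow_le_pow_right₀ (hx i₀) hk₀)
    (prod_le_prod (fun i _ => hx₀ i) fun i _ => le_self_pow₀ (hx i) (hk i))
    (prod_nonneg fun i _ => hx₀ i) (pow_nonneg (hx₀ i₀) _)

theorem prod_rpow_one_add_inv_card_le_prod_mul (hx : ∀ i, 1 ≤ x i) (hmax : ∀ i, x i ≤ x i₀) :
    ∏ i, x i ^ (1 + (Fintype.card ι : ℝ)⁻¹) ≤ (∏ i, x i) * x i₀ := by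
  have hx₀ : ∀ i, 0 ≤ x i := fun i => zero_le_one.trans (hx i)
  have hcard : (Fintype.card ι : ℝ) ≠ 0 := Nat.cast_ne_zero.2 (Fintype.card_pos_iff.2 ⟨i₀⟩).ne'
  calc ∏ i, x i ^ (1 + (Fintype.card ι : ℝ)⁻¹)
      = ∏ i, x i * x i ^ (Fintype.card ι : ℝ)⁻¹ := by
        congr! 1 with i
        rw [Real.rpow_add (zero_lt_one.trans_le (hx i)), Real.rpow_one]
    _ ≤ ∏ i, x i * x i₀ ^ (Fintype.card ι : ℝ)⁻¹ :=
        prod_le_prod (fun i _ => mul_nonneg (hx₀ i) (Real.rpow_nonneg (hx₀ i) _)) fun i _ =>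
          mul_le_mul_of_nonneg_left (Real.rpow_le_rpow (hx₀ i) (hmax i) (by positivity)) (hx₀ i)
    _ = (∏ i, x i) * x i₀ := by
        rw [prod_mul_distrib, prod_const, card_univ, ← Real.rpow_natCast, ← Real.rpow_mul (hx₀ i₀),
          inv_mul_cancel₀ hcard, Real.rpow_one]

end

/-- Convergence of multiple zeta values: for `d ≥ 1` and positive integers
`k₁,…,k_d` with `k_d ≥ 2`, the family `1/(n₁^{k₁}⋯n_d^{k_d})`, indexed by
strictly increasing `d`-tuples of positive integers, is summable; in
particular `ζ(k₁,…,k_d)` is well defined. -/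
theorem mzv_summable (d : ℕ) (hd : 1 ≤ d) (k : Fin d → ℕ+)
    (hk : 2 ≤ (k ⟨d - 1, by omega⟩ : ℕ)) :
    Summable (fun f : {g : Fin d → ℕ+ // StrictMono g} =>
      (1 : ℝ) / ∏ i : Fin d, ((f.1 i : ℕ) : ℝ) ^ ((k i : ℕ+) : ℕ)) := by
  set q : ℝ := 1 + (d : ℝ)⁻¹
  have hq : 1 < q := lt_add_of_pos_right 1 (inv_pos.2 (by exact_mod_cast hd))
  have hdom : Summable fun n : Fin d → ℕ+ => ∏ i, ((n i : ℕ) : ℝ) ^ (-q) :=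
    summable_fin_pi_prod (fun _ (n : ℕ+) => ((n : ℕ) : ℝ) ^ (-q))
      (fun _ => (Real.summable_nat_rpow.2 (neg_lt_neg hq)).comp_injective PNat.coe_injective)
      fun _ _ => by positivity
  refine Summable.of_nonneg_of_le (fun f => by positivity) (fun f => ?_)
    (hdom.comp_injective Subtype.val_injective)
  have hmax : ∀ i, ((f.1 i : ℕ) : ℝ) ≤ ((f.1 ⟨d - 1, by omega⟩ : ℕ) : ℝ) := fun i => by
    exact_mod_cast f.2.monotone (Fin.le_def.2 (Nat.le_sub_one_of_lt i.2))
  have hone : ∀ i, (1 : ℝ) ≤ ((f.1 i : ℕ) : ℝ) := fun i => by exact_mod_cast (f.1 i).2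
  have hbound := (prod_rpow_one_add_inv_card_le_prod_mul hone hmax).trans
    (prod_mul_le_prod_pow hone (fun i => (k i).ne_zero) hk)
  rw [Fintype.card_fin] at hbound
  calc 1 / ∏ i, ((f.1 i : ℕ) : ℝ) ^ ((k i : ℕ+) : ℕ)
      ≤ 1 / ∏ i, ((f.1 i : ℕ) : ℝ) ^ q := one_div_le_one_div_of_le (by positivity) hbound
    _ = ∏ i, ((f.1 i : ℕ) : ℝ) ^ (-q) := by
      simp only [one_div, ← prod_inv_distrib, Real.rpow_neg (Nat.cast_nonneg _)]
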